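/- arXiv:1911.09970 — 2 statements merged into one kernel-verified Lean document; each statement's English description precedes it below -/
import Mathlib

section
/- Let M ≥ 1 and let m_1 ≥ m_2 ≥ … ≥ m_M ≥ 0 be a nonincreasing sequence with Σ_{i=1}^M m_i = 1 and m_i > 0 for all i appearing below. For 0 ≤ i < M define the residual set R_i = {m_{i+1}, …, m_M} and its Compressibility Index CI(R_i) = (Σ_{j=i+1}^M m_j)² / ((M−i) · Σ_{j=i+1}^M m_j²). Then for every d with 1 ≤ d ≤ M−1 and Σ_{j=d+1}^M m_j > 0, the oracle residual satisfies 1 − Σ_{i=1}^d m_i ≥ ∏_{i=0}^{d−1} (1 − 1/√((M−i)·CI(R_i))). -/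
/-!
Write `S i = ∑_{j>i} m j` and `Q i = ∑_{j>i} m j ^ 2` for the tail sums. Since
`(M - i) · CI(R_i) = S i ^ 2 / Q i`, the `i`-th factor is `1 - √(Q i) / S i`, and
`S i · (1 - √(Q i) / S i) = S i - √(Q i) ≤ S i - m (i + 1) = S (i + 1)`.
Each factor lies in `[0, 1]` because `m (i + 1) ≤ √(Q i) ≤ S i`, so multiplying these
inequalities from `S 0 = 1` gives `∏_{i<d} (1 - √(Q i) / S i) ≤ S d = 1 - ∑_{i ≤ d} m i`.
-/

/-- Compressibility Index of the residual set `R_i = {m_{i+1}, …, m_M}`: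
`CI(R_i) = (Σ_{j=i+1}^M m_j)² / ((M−i) · Σ_{j=i+1}^M m_j²)`. -/
noncomputable def CIres (M : ℕ) (m : ℕ → ℝ) (i : ℕ) : ℝ :=
  (∑ j ∈ Finset.Icc (i + 1) M, m j) ^ 2 /
    (((M : ℝ) - i) * ∑ j ∈ Finset.Icc (i + 1) M, m j ^ 2)

open Finset

theorem Real.sqrt_sum_sq_le_sum {ι : Type*} {s : Finset ι} {f : ι → ℝ}
    (hf : ∀ i ∈ s, 0 ≤ f i) : √(∑ i ∈ s, f i ^ 2) ≤ ∑ i ∈ s, f i :=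
  Real.sqrt_le_iff.mpr ⟨sum_nonneg hf, sum_sq_le_sq_sum_of_nonneg hf⟩

theorem Real.le_sqrt_sum_sq {ι : Type*} {s : Finset ι} (f : ι → ℝ) {a : ι} (ha : a ∈ s) :
    f a ≤ √(∑ i ∈ s, f i ^ 2) :=
  (le_abs_self _).trans <| Real.abs_le_sqrt <|
    single_le_sum (f := fun i ↦ f i ^ 2) (fun i _ ↦ sq_nonneg (f i)) ha

theorem Real.one_div_sqrt_sq_div {a : ℝ} (ha : 0 ≤ a) (b : ℝ) :
    1 / √(a ^ 2 / b) = √b / a := by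
  rw [Real.sqrt_div (sq_nonneg a), Real.sqrt_sq ha, one_div_div]

theorem prod_range_mul_le_of_mul_le_succ {c S : ℕ → ℝ} {d : ℕ}
    (hc : ∀ i < d, 0 ≤ c i) (hS : ∀ i < d, S i * c i ≤ S (i + 1)) :
    (∏ i ∈ range d, c i) * S 0 ≤ S d := by
  induction d with
  | zero => simp
  | succ k ih =>
    calc (∏ i ∈ range (k + 1), c i) * S 0 = ((∏ i ∈ range k, c i) * S 0) * c k := by
          rw [prod_range_succ]; ring
      _ ≤ S k * c k := by
          gcongr
          · exact hc k k.lt_succ_self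
          · exact ih (fun i hi ↦ hc i (by omega)) (fun i hi ↦ hS i (by omega))
      _ ≤ S (k + 1) := hS k k.lt_succ_self

theorem sum_Icc_succ_eq_add {β : Type*} [AddCommMonoid β] (f : ℕ → β) {i M : ℕ} (hi : i < M) :
    ∑ j ∈ Icc (i + 1) M, f j = f (i + 1) + ∑ j ∈ Icc (i + 2) M, f j := by
  rw [← add_sum_Ioc_eq_sum_Icc (by omega : i + 1 ≤ M), ← Icc_add_one_left_eq_Ioc]
  rfl

section CIres

variable {M : ℕ} {m : ℕ → ℝ} {i : ℕ}

theorem mul_CIres_eq (hi : i < M) :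
    ((M : ℝ) - i) * CIres M m i =
      (∑ j ∈ Icc (i + 1) M, m j) ^ 2 / ∑ j ∈ Icc (i + 1) M, m j ^ 2 := by
  have hMi : (M : ℝ) - i ≠ 0 := sub_ne_zero.mpr (by exact_mod_cast hi.ne')
  rw [CIres, mul_div_assoc', mul_div_mul_left _ _ hMi]

theorem one_div_sqrt_mul_CIres (hi : i < M) (hm : ∀ j ∈ Icc (i + 1) M, 0 ≤ m j) :
    1 / √(((M : ℝ) - i) * CIres M m i) =
      √(∑ j ∈ Icc (i + 1) M, m j ^ 2) / ∑ j ∈ Icc (i + 1) M, m j := by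
  rw [mul_CIres_eq hi, Real.one_div_sqrt_sq_div (sum_nonneg hm)]

theorem CIres_factor_nonneg (hi : i < M) (hm : ∀ j ∈ Icc (i + 1) M, 0 ≤ m j) :
    0 ≤ 1 - 1 / √(((M : ℝ) - i) * CIres M m i) := by
  rw [one_div_sqrt_mul_CIres hi hm, sub_nonneg]
  exact div_le_one_of_le₀ (Real.sqrt_sum_sq_le_sum hm) (sum_nonneg hm)

theorem sum_Icc_mul_CIres_factor_le (hi : i < M) (hm : ∀ j ∈ Icc (i + 1) M, 0 < m j) :
    (∑ j ∈ Icc (i + 1) M, m j) * (1 - 1 / √(((M : ℝ) - i) * CIres M m i)) ≤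
      ∑ j ∈ Icc (i + 2) M, m j := by
  have hS : 0 < ∑ j ∈ Icc (i + 1) M, m j :=
    sum_pos hm (nonempty_Icc.mpr (by omega))
  have hmax : m (i + 1) ≤ √(∑ j ∈ Icc (i + 1) M, m j ^ 2) :=
    Real.le_sqrt_sum_sq m (mem_Icc.mpr ⟨le_rfl, hi⟩)
  rw [one_div_sqrt_mul_CIres hi fun j hj ↦ (hm j hj).le, mul_one_sub,
    mul_div_cancel₀ _ hS.ne', sum_Icc_succ_eq_add m hi]
  linarith

end CIres

theorem stmt8_general
    (M : ℕ) (m : ℕ → ℝ)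
    (hpos : ∀ i, 1 ≤ i → i ≤ M → 0 < m i)
    (hsum : ∑ i ∈ Finset.Icc 1 M, m i = 1)
    (d : ℕ) (hdM : d ≤ M - 1) :
    1 - ∑ i ∈ Finset.Icc 1 d, m i ≥
      ∏ i ∈ Finset.range d,
        (1 - 1 / Real.sqrt (((M : ℝ) - i) * CIres M m i)) := by
  have hd : d ≤ M := hdM.trans (Nat.sub_le M 1)
  have htail_pos : ∀ i, ∀ j ∈ Icc (i + 1) M, 0 < m j := fun i j hj ↦
    hpos j (by have := (mem_Icc.mp hj).1; omega) (mem_Icc.mp hj).2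
  have hresidual : 1 - ∑ i ∈ Icc 1 d, m i = ∑ j ∈ Icc (d + 1) M, m j := by
    rw [← hsum, sub_eq_iff_eq_add', Icc_add_one_left_eq_Ioc, ← zero_add 1,
      Icc_add_one_left_eq_Ioc, Icc_add_one_left_eq_Ioc, sum_Ioc_consecutive m d.zero_le hd]
  have hbound := prod_range_mul_le_of_mul_le_succ (d := d)
    (S := fun i ↦ ∑ j ∈ Icc (i + 1) M, m j)
    (fun i hi ↦ CIres_factor_nonneg (by omega) fun j hj ↦ (htail_pos i j hj).le)
    (fun i hi ↦ sum_Icc_mul_CIres_factor_le (by omega) (htail_pos i))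
  rw [ge_iff_le, hresidual]
  simpa [hsum] using hbound

/-- Oracle residual lower bound (18) of the paper: for a nonincreasing
sequence of positive reals `m_1 ≥ … ≥ m_M` summing to `1`, the oracle
residual after recovering the `d` largest coefficients satisfies
`1 − Σ_{i=1}^d m_i ≥ ∏_{i=0}^{d−1} (1 − 1/√((M−i)·CI(R_i)))`. -/
theorem stmt8
    (M : ℕ) (hM : 1 ≤ M) (m : ℕ → ℝ)
    (hmono : ∀ i j, 1 ≤ i → i ≤ j → j ≤ M → m j ≤ m i)
    (hpos : ∀ i, 1 ≤ i → i ≤ M → 0 < m i)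
    (hsum : ∑ i ∈ Finset.Icc 1 M, m i = 1)
    (d : ℕ) (hd1 : 1 ≤ d) (hdM : d ≤ M - 1)
    (htail : 0 < ∑ j ∈ Finset.Icc (d + 1) M, m j) :
    1 - ∑ i ∈ Finset.Icc 1 d, m i ≥
      ∏ i ∈ Finset.range d,
        (1 - 1 / Real.sqrt (((M : ℝ) - i) * CIres M m i)) :=
  stmt8_general M m hpos hsum d hdM
end

section
/- Let M ≥ 1 and let m_1 ≥ m_2 ≥ … ≥ m_M > 0 be a nonincreasing sequence with Σ_{i=1}^M m_i = 1. For 0 ≤ i < M define R_i = {m_{i+1}, …, m_M} and CI(R_i) = (Σ_{j=i+1}^M m_j)² / ((M−i) · Σ_{j=i+1}^M m_j²), and write CI(h) = CI(R_0). Fix d with 1 ≤ d ≤ M−1, and assume that for every i with 1 ≤ i ≤ d−1 one has CI(R_i) ≥ ((M−i+1)/(M−i)) · CI(R_{i−1}). Then 1 − Σ_{i=1}^d m_i ≥ (1 − 1/√(M · CI(h)))^d. (Note that M·CI(h) ≥ 1 always holds, so the base of the power is nonnegative.) -/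
open Finset

theorem pow_mul_le_of_mul_le_succ {α : Type*} [Semiring α] [PartialOrder α] [IsOrderedRing α]
    {T : ℕ → α} {r : α} {d : ℕ} (hr : 0 ≤ r)
    (hstep : ∀ k < d, T k * r ≤ T (k + 1)) : T 0 * r ^ d ≤ T d := by
  induction d with
  | zero => simp
  | succ d ih =>
    calc T 0 * r ^ (d + 1) = T 0 * r ^ d * r := by rw [pow_succ, mul_assoc]
      _ ≤ T d * r := by gcongr; exact ih fun k hk => hstep k (by omega)
      _ ≤ T (d + 1) := hstep d (by omega)

theorem mul_one_sub_one_div_sqrt_sq_div {T : ℝ} (hT : 0 < T) (Q : ℝ) :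
    T * (1 - 1 / √(T ^ 2 / Q)) = T - √Q := by
  rw [Real.sqrt_div (sq_nonneg T), Real.sqrt_sq hT.le, one_div_div, mul_sub, mul_one,
    mul_div_cancel₀ _ hT.ne']

section TailSum

variable (M : ℕ) (m : ℕ → ℝ)

def tailSum (i : ℕ) : ℝ := ∑ j ∈ Icc (i + 1) M, m j

variable {M m}

theorem tailSum_eq_add {i : ℕ} (hi : i < M) :
    tailSum M m i = m (i + 1) + tailSum M m (i + 1) := by
  rw [tailSum, Icc_eq_cons_Ioc (by omega), sum_cons, ← Icc_add_one_left_eq_Ioc, tailSum]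

theorem sum_Icc_one_add_tailSum {d : ℕ} (hd : d ≤ M) :
    ∑ i ∈ Icc 1 d, m i + tailSum M m d = ∑ i ∈ Icc 1 M, m i := by
  have hIcc (a b : ℕ) : Icc (a + 1) b = Ioc a b := Icc_add_one_left_eq_Ioc a b
  rw [tailSum, hIcc 0, hIcc 0, hIcc d]
  exact sum_Ioc_consecutive m d.zero_le hd

theorem sub_mul_CIres {i : ℕ} (hi : i < M) :
    ((M : ℝ) - i) * CIres M m i = tailSum M m i ^ 2 / tailSum M (fun j => m j ^ 2) i := by
  have hMi : ((M : ℝ) - i) ≠ 0 := by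
    rw [sub_ne_zero]; exact_mod_cast hi.ne'
  rw [CIres, ← mul_div_assoc, mul_div_mul_left _ _ hMi, tailSum, tailSum]

theorem tailSum_pos {i : ℕ} (hm : ∀ j ∈ Icc (i + 1) M, 0 < m j) (hi : i < M) :
    0 < tailSum M m i :=
  sum_pos hm (nonempty_Icc.2 hi)

theorem tailSum_mul_le_tailSum_succ {i : ℕ} (hm : ∀ j ∈ Icc (i + 1) M, 0 < m j) (hi : i < M) :
    tailSum M m i * (1 - 1 / √(((M : ℝ) - i) * CIres M m i)) ≤ tailSum M m (i + 1) := by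
  have hmi : m (i + 1) ≤ √(tailSum M (fun j => m j ^ 2) i) :=
    (le_abs_self _).trans <| Real.abs_le_sqrt <|
      single_le_sum (f := fun j => m j ^ 2) (fun j _ => sq_nonneg (m j)) (mem_Icc.2 ⟨le_rfl, hi⟩)
  rw [sub_mul_CIres hi, mul_one_sub_one_div_sqrt_sq_div (tailSum_pos hm hi), tailSum_eq_add hi]
  linarith

theorem one_le_sub_mul_CIres {i : ℕ} (hm : ∀ j ∈ Icc (i + 1) M, 0 < m j) (hi : i < M) :
    1 ≤ ((M : ℝ) - i) * CIres M m i := by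
  rw [sub_mul_CIres hi, one_le_div (tailSum_pos (fun j hj => pow_pos (hm j hj) 2) hi)]
  exact sum_sq_le_sq_sum_of_nonneg fun j hj => (hm j hj).le

theorem sub_mul_CIres_le_succ {i : ℕ} (hi : i + 1 < M)
    (hCI : CIres M m (i + 1) ≥
      (((M : ℝ) - (i + 1 : ℕ) + 1) / ((M : ℝ) - (i + 1 : ℕ))) * CIres M m i) :
    ((M : ℝ) - i) * CIres M m i ≤ ((M : ℝ) - (i + 1 : ℕ)) * CIres M m (i + 1) := by
  have ha : (0 : ℝ) < M - (i + 1 : ℕ) := by rw [sub_pos]; exact_mod_cast hi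
  calc ((M : ℝ) - i) * CIres M m i
      = ((M : ℝ) - (i + 1 : ℕ)) *
          ((((M : ℝ) - (i + 1 : ℕ) + 1) / ((M : ℝ) - (i + 1 : ℕ))) * CIres M m i) := by
        rw [← mul_assoc, mul_div_cancel₀ _ ha.ne']; push_cast; ring
    _ ≤ ((M : ℝ) - (i + 1 : ℕ)) * CIres M m (i + 1) := by gcongr

theorem mul_CIres_zero_le_sub_mul_CIres {n : ℕ} (hn : n < M)
    (hCI : ∀ i, 1 ≤ i → i ≤ n →
      CIres M m i ≥ (((M : ℝ) - i + 1) / ((M : ℝ) - i)) * CIres M m (i - 1)) :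
    ∀ i ≤ n, (M : ℝ) * CIres M m 0 ≤ ((M : ℝ) - i) * CIres M m i := by
  intro i
  induction i with
  | zero => simp
  | succ i ih =>
    intro hi
    exact (ih (by omega)).trans (sub_mul_CIres_le_succ (by omega) (hCI (i + 1) (by omega) hi))

end TailSum

theorem stmt9_general
    (M : ℕ) (hM : 1 ≤ M) (m : ℕ → ℝ)
    (hpos : ∀ i, 1 ≤ i → i ≤ M → 0 < m i)
    (hsum : ∑ i ∈ Finset.Icc 1 M, m i = 1)
    (d : ℕ) (hdM : d ≤ M - 1)
    (hCI : ∀ i, 1 ≤ i → i ≤ d - 1 →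
      CIres M m i ≥ (((M : ℝ) - i + 1) / ((M : ℝ) - i)) * CIres M m (i - 1)) :
    1 - ∑ i ∈ Finset.Icc 1 d, m i ≥
      (1 - 1 / Real.sqrt (M * CIres M m 0)) ^ d := by
  have hm (i : ℕ) : ∀ j ∈ Icc (i + 1) M, 0 < m j := fun j hj =>
    hpos j ((Nat.le_add_left 1 i).trans (mem_Icc.1 hj).1) (mem_Icc.1 hj).2
  have hc : 1 ≤ (M : ℝ) * CIres M m 0 := by
    simpa using one_le_sub_mul_CIres (hm 0) (by omega)
  have hr : 0 ≤ 1 - 1 / √(M * CIres M m 0) :=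
    sub_nonneg.2 <| div_le_one_of_le₀ (Real.one_le_sqrt.2 hc) (Real.sqrt_nonneg _)
  have hstep : ∀ k < d, tailSum M m k * (1 - 1 / √(M * CIres M m 0)) ≤ tailSum M m (k + 1) := by
    intro k hk
    have hck := mul_CIres_zero_le_sub_mul_CIres (by omega) hCI k (by omega)
    calc tailSum M m k * (1 - 1 / √(M * CIres M m 0))
        ≤ tailSum M m k * (1 - 1 / √(((M : ℝ) - k) * CIres M m k)) := by
          gcongr
          exact (tailSum_pos (hm k) (by omega)).le
      _ ≤ tailSum M m (k + 1) := tailSum_mul_le_tailSum_succ (hm k) (by omega)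
  have hgeom := pow_mul_le_of_mul_le_succ hr hstep
  rw [show tailSum M m 0 = 1 from hsum, one_mul] at hgeom
  linarith [sum_Icc_one_add_tailSum (m := m) (show d ≤ M by omega)]

/-- Geometric compressibility lower bound (19) of the paper: under the
assumption (20) that removing the largest element of the residual set
increases the Compressibility Index by at least the factor
`(M−i+1)/(M−i)`, the oracle residual satisfies
`1 − Σ_{i=1}^d m_i ≥ (1 − 1/√(M·CI(h)))^d`, where `CI(h) = CI(R_0)`. -/
theorem stmt9
    (M : ℕ) (hM : 1 ≤ M) (m : ℕ → ℝ)
    (hmono : ∀ i j, 1 ≤ i → i ≤ j → j ≤ M → m j ≤ m i)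
    (hpos : ∀ i, 1 ≤ i → i ≤ M → 0 < m i)
    (hsum : ∑ i ∈ Finset.Icc 1 M, m i = 1)
    (d : ℕ) (hd1 : 1 ≤ d) (hdM : d ≤ M - 1)
    (hCI : ∀ i, 1 ≤ i → i ≤ d - 1 →
      CIres M m i ≥ (((M : ℝ) - i + 1) / ((M : ℝ) - i)) * CIres M m (i - 1)) :
    1 - ∑ i ∈ Finset.Icc 1 d, m i ≥
      (1 - 1 / Real.sqrt (M * CIres M m 0)) ^ d :=
  stmt9_general M hM m hpos hsum d hdM hCI
end
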